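/- Let s_1 and s_2 be coprime positive integers. Then the connected one-dimensional closed subgroup {(θ_1, θ_2) ∈ T^2 : s_1θ_1 − s_2θ_2 = 0 in ℝ/ℤ} (a subgroup of positive slope s = s_1/s_2) intersects Π_3, i.e., contains a point of the form q(x, y) with 0 < x < 1/3 and 0 < y < 1/3. -/

import Mathlib

noncomputable section

/-- The two-dimensional torus `T² = (ℝ/ℤ)²`. -/
abbrev T2 := AddCircle (1 : ℝ) × AddCircle (1 : ℝ)

/-- `Π_r ⊂ T²`, the image under `q` of the open square `(0, 1/r)²`. -/
def PiSquare (r : ℕ) : Set T2 :=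
  {θ : T2 | ∃ x y : ℝ, 0 < x ∧ x < 1 / (r : ℝ) ∧ 0 < y ∧ y < 1 / (r : ℝ) ∧
    θ = ((x : AddCircle (1 : ℝ)), (y : AddCircle (1 : ℝ)))}

/-! The point `q(c/s₁, c/s₂)` lies on the subgroup for every `c`, since `s₁ (c/s₁) = c = s₂ (c/s₂)`
already in `ℝ`; taking `c = 1/6` puts it in `Π₃` because `s₁, s₂ ≥ 1`. -/

theorem AddCircle.zsmul_coe_div_self {p : ℝ} (c : ℝ) {n : ℤ} (hn : n ≠ 0) :
    n • ((c / n : ℝ) : AddCircle p) = c := by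
  rw [← AddCircle.coe_zsmul, zsmul_eq_mul, mul_div_cancel₀ _ (Int.cast_ne_zero.2 hn)]

theorem AddCircle.zsmul_coe_div_sub_zsmul_coe_div {p : ℝ} (c : ℝ) {n m : ℤ} (hn : n ≠ 0)
    (hm : m ≠ 0) :
    n • ((c / n : ℝ) : AddCircle p) - m • ((c / m : ℝ) : AddCircle p) = 0 := by
  rw [zsmul_coe_div_self c hn, zsmul_coe_div_self c hm, sub_self]

theorem div_intCast_mem_Ioo {c b : ℝ} (hc : 0 < c) (hcb : c < b) {n : ℤ} (hn : 0 < n) :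
    c / n ∈ Set.Ioo 0 b := by
  have hn' : (1 : ℝ) ≤ n := by exact_mod_cast hn
  exact ⟨div_pos hc (by positivity), (div_le_self hc.le hn').trans_lt hcb⟩

theorem positive_slope_meets_piSquare_three
    (s1 s2 : ℤ) (h1 : 0 < s1) (h2 : 0 < s2) :
    ∃ x y : ℝ, 0 < x ∧ x < 1 / 3 ∧ 0 < y ∧ y < 1 / 3 ∧
      ((x : AddCircle (1 : ℝ)), (y : AddCircle (1 : ℝ))) ∈
        ({θ : T2 | s1 • θ.1 - s2 • θ.2 = 0} ∩ PiSquare 3) := by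
  have hc : (0 : ℝ) < 1 / 6 ∧ (1 / 6 : ℝ) < 1 / 3 := by norm_num
  obtain ⟨hx0, hx⟩ := div_intCast_mem_Ioo hc.1 hc.2 h1
  obtain ⟨hy0, hy⟩ := div_intCast_mem_Ioo hc.1 hc.2 h2
  have h3 : ((3 : ℕ) : ℝ) = 3 := by norm_num
  refine ⟨_, _, hx0, hx, hy0, hy, ?_, _, _, hx0, h3 ▸ hx, hy0, h3 ▸ hy, rfl⟩
  exact AddCircle.zsmul_coe_div_sub_zsmul_coe_div _ h1.ne' h2.ne'
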